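/- The six-point degree-3 rule of type $[0,0,1]$: there exists a six-point orbit $\{(L_1,L_2,L_3)\}$ (all permutations of a triple with $L_1+L_2+L_3=1$) whose invariants satisfy $p = 1/4$ and $q = 1/10$, and the equal-weight rule with weight $1/6$ at each of these six points is exact for all polynomials of degree at most 3. -/

import Mathlib

/-!
Put `Lᵢ = (1 + uᵢ) / 3`. The conditions `∑ Lᵢ = 1`, `p = 1/4`, `q = 1/10` say that the `uᵢ` have
elementary symmetric functions `0, -3/4, 1/5`, i.e. they are the roots of `4u³ - 3u = 4/5`; these are
`cos θ, -cos (θ ± π/3)` with `cos 3θ = 4/5`.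

On the monomial `xⁱ yʲ` the six-point sum equals `pᵢ pⱼ - p_{i+j}` with `pₖ = ∑ Lᵢᵏ`, and Newton's
identities give `pₖ = 6 / ((k+1)(k+2))` for `k ≤ 3`. The integral of `xⁱ yʲ` over the triangle is
`i! j! / (i+j+2)!` by the Beta integral, and the two sides are compared monomial by monomial.
-/

open MvPolynomial Finset Real intervalIntegral Nat

theorem exists_cos_triple (t : ℝ) (ht₀ : -1 ≤ t) (ht₁ : t ≤ 1) :
    ∃ u v w : ℝ, u + v + w = 0 ∧ u * v + v * w + w * u = -3 / 4 ∧ u * v * w = t / 4 := by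
  set θ := arccos t / 3
  have hcos3 : 4 * cos θ ^ 3 - 3 * cos θ = t := by
    rw [← cos_three_mul, show 3 * θ = arccos t by ring, cos_arccos ht₀ ht₁]
  have hsqrt3 : √3 ^ 2 = 3 := sq_sqrt (by norm_num)
  refine ⟨cos θ, -cos (θ + π / 3), -cos (θ - π / 3), ?_, ?_, ?_⟩ <;>
    simp only [cos_add, cos_sub, cos_pi_div_three, sin_pi_div_three]
  · ring
  · linear_combination (-3 / 4) * sin_sq_add_cos_sq θ + (-sin θ ^ 2 / 4) * hsqrt3
  · linear_combination hcos3 / 4 - (cos θ * sin θ ^ 2 / 4) * hsqrt3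
      - (3 / 4 * cos θ) * sin_sq_add_cos_sq θ

theorem exists_triple_elementary_symm :
    ∃ a b c : ℝ, a + b + c = 1 ∧ a * b + b * c + c * a = 1 / 4 ∧ a * b * c = 1 / 60 := by
  obtain ⟨u, v, w, h1, h2, h3⟩ := exists_cos_triple (4 / 5) (by norm_num) (by norm_num)
  refine ⟨(1 + u) / 3, (1 + v) / 3, (1 + w) / 3, ?_, ?_, ?_⟩
  · linear_combination h1 / 3
  · linear_combination (2 / 9) * h1 + h2 / 9
  · linear_combination (h1 + h2 + h3) / 27

theorem MvPolynomial.eval_fin_two {R : Type*} [CommSemiring R] (f : MvPolynomial (Fin 2) R)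
    (u v : R) : eval ![u, v] f = ∑ m ∈ f.support, coeff m f * (u ^ m 0 * v ^ m 1) := by
  simp [eval_eq', Fin.prod_univ_two]

theorem MvPolynomial.add_le_totalDegree_of_mem_support {R : Type*} [CommSemiring R]
    {f : MvPolynomial (Fin 2) R} {m : Fin 2 →₀ ℕ} (hm : m ∈ f.support) :
    m 0 + m 1 ≤ f.totalDegree := by
  simpa [Finsupp.sum_fintype, Fin.sum_univ_two] using le_totalDegree hm

theorem integral_pow_mul_one_sub_pow (i n : ℕ) :
    ∫ x in (0:ℝ)..1, x ^ i * (1 - x) ^ n = (i ! * n ! : ℝ) / (i + n + 1)! := by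
  induction n generalizing i with
  | zero =>
    simp only [pow_zero, mul_one, integral_pow, one_pow, zero_pow (succ_ne_zero _), sub_zero,
      add_zero, Nat.factorial_succ, Nat.factorial_zero]
    push_cast
    field_simp
  | succ n ih =>
    have parts : ∫ x in (0:ℝ)..1, x ^ i * (1 - x) ^ (n + 1)
        = (n + 1) / (i + 1) * ∫ x in (0:ℝ)..1, x ^ (i + 1) * (1 - x) ^ n := by
      have h := integral_mul_deriv_eq_deriv_mul (a := 0) (b := 1)
        (u := fun x : ℝ => (1 - x) ^ (n + 1)) (u' := fun x => -((n + 1) * (1 - x) ^ n))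
        (v := fun x : ℝ => x ^ (i + 1) / (i + 1)) (v' := fun x => x ^ i)
        (fun x _ => ((hasDerivAt_pow (n + 1) (1 - x)).comp x
          ((hasDerivAt_id x).const_sub 1)).congr_deriv (by push_cast; ring))
        (fun x _ => ((hasDerivAt_pow (i + 1) x).div_const ((i:ℝ) + 1)).congr_deriv
          (by field_simp; push_cast; ring))
        (by apply Continuous.intervalIntegrable; fun_prop)
        (by apply Continuous.intervalIntegrable; fun_prop)
      rw [integral_congr (g := fun x => (1 - x) ^ (n + 1) * x ^ i) (fun x _ => mul_comm _ _), h]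
      rw [← integral_const_mul]
      simp only [sub_self, zero_pow (succ_ne_zero _), zero_mul, zero_div, mul_zero, zero_sub,
        ← integral_neg]
      exact integral_congr fun x _ => by field_simp
    rw [parts, ih, Nat.factorial_succ n, show i + (n + 1) + 1 = i + 1 + n + 1 by ring,
      Nat.factorial_succ i]
    push_cast
    field_simp

theorem integral_monomial_zero_one_sub (i j : ℕ) (x : ℝ) :
    ∫ y in (0:ℝ)..(1 - x), x ^ i * y ^ j = x ^ i * (1 - x) ^ (j + 1) / (j + 1) := by
  rw [integral_const_mul, integral_pow]
  ring

theorem integral_triangle_monomial (i j : ℕ) :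
    ∫ x in (0:ℝ)..1, ∫ y in (0:ℝ)..(1 - x), x ^ i * y ^ j = (i ! * j ! : ℝ) / (i + j + 2)! := by
  simp_rw [integral_monomial_zero_one_sub, integral_div, integral_pow_mul_one_sub_pow,
    Nat.factorial_succ j, show i + (j + 1) + 1 = i + j + 2 by ring]
  push_cast
  field_simp

theorem integral_triangle_eval (f : MvPolynomial (Fin 2) ℝ) :
    ∫ x in (0:ℝ)..1, ∫ y in (0:ℝ)..(1 - x), eval ![x, y] f
      = ∑ m ∈ f.support, coeff m f * ((m 0)! * (m 1)! / (m 0 + m 1 + 2)!) := by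
  have inner (x : ℝ) : ∫ y in (0:ℝ)..(1 - x), eval ![x, y] f
      = ∑ m ∈ f.support, coeff m f * ∫ y in (0:ℝ)..(1 - x), x ^ m 0 * y ^ m 1 := by
    simp_rw [eval_fin_two, ← integral_const_mul]
    exact integral_finsetSum fun m _ => by
      apply Continuous.intervalIntegrable; fun_prop
  simp_rw [inner]
  rw [integral_finsetSum]
  · exact sum_congr rfl fun m _ => by rw [integral_const_mul, integral_triangle_monomial]
  · intro m _
    simp_rw [integral_monomial_zero_one_sub]
    apply Continuous.intervalIntegrable; fun_prop

theorem sum_eval_six_points (a b c : ℝ) (f : MvPolynomial (Fin 2) ℝ) :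
    eval ![b, c] f + eval ![c, b] f + eval ![a, c] f + eval ![c, a] f
        + eval ![a, b] f + eval ![b, a] f
      = ∑ m ∈ f.support, coeff m f * ((a ^ m 0 + b ^ m 0 + c ^ m 0) * (a ^ m 1 + b ^ m 1 + c ^ m 1)
          - (a ^ (m 0 + m 1) + b ^ (m 0 + m 1) + c ^ (m 0 + m 1))) := by
  simp only [eval_fin_two, ← sum_add_distrib]
  exact sum_congr rfl fun m _ => by ring

theorem pow_sum_eq_of_elementary_symm {a b c : ℝ} (h1 : a + b + c = 1)
    (h2 : a * b + b * c + c * a = 1 / 4) (h3 : a * b * c = 1 / 60) {k : ℕ} (hk : k ≤ 3) :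
    a ^ k + b ^ k + c ^ k = 6 / ((k + 1) * (k + 2)) := by
  interval_cases k
  · norm_num
  · linear_combination h1
  · linear_combination (a + b + c + 1) * h1 - 2 * h2
  · linear_combination ((a + b + c) ^ 2 + (a + b + c) + 1 - 3 * (a * b + b * c + c * a)) * h1
      - 3 * h2 + 3 * h3

theorem six_point_weight_eq_triangle_moment {a b c : ℝ} (h1 : a + b + c = 1)
    (h2 : a * b + b * c + c * a = 1 / 4) (h3 : a * b * c = 1 / 60) {i j : ℕ} (hij : i + j ≤ 3) :
    1 / 6 * ((a ^ i + b ^ i + c ^ i) * (a ^ j + b ^ j + c ^ j)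
        - (a ^ (i + j) + b ^ (i + j) + c ^ (i + j)))
      = 2 * ((i ! * j ! : ℝ) / (i + j + 2)!) := by
  have hp (k : ℕ) (hk : k ≤ 3) := pow_sum_eq_of_elementary_symm h1 h2 h3 hk
  rw [hp i (by omega), hp j (by omega), hp (i + j) hij]
  have hi : i ≤ 3 := by omega
  have hj : j ≤ 3 := by omega
  interval_cases i <;> interval_cases j <;> first | omega | norm_num [Nat.factorial]

theorem six_point_rule_degree_three :
    ∃ L₁ L₂ L₃ : ℝ, L₁ + L₂ + L₃ = 1 ∧
      1 - 3*(L₁*L₂ + L₂*L₃ + L₃*L₁) = 1/4 ∧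
      1 + (27/2)*(L₁*L₂*L₃) - (9/2)*(L₁*L₂ + L₂*L₃ + L₃*L₁) = 1/10 ∧
      ∀ f : MvPolynomial (Fin 2) ℝ, f.totalDegree ≤ 3 →
        (1/6 : ℝ) * (MvPolynomial.eval ![L₂, L₃] f + MvPolynomial.eval ![L₃, L₂] f
          + MvPolynomial.eval ![L₁, L₃] f + MvPolynomial.eval ![L₃, L₁] f
          + MvPolynomial.eval ![L₁, L₂] f + MvPolynomial.eval ![L₂, L₁] f) =
        (1 / (1/2 : ℝ)) * ∫ x in (0:ℝ)..1, ∫ y in (0:ℝ)..(1-x),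
          MvPolynomial.eval ![x, y] f := by
  obtain ⟨a, b, c, h1, h2, h3⟩ := exists_triple_elementary_symm
  refine ⟨a, b, c, h1, by linear_combination -3 * h2,
    by linear_combination (27 / 2) * h3 - (9 / 2) * h2, fun f hf => ?_⟩
  rw [sum_eval_six_points, integral_triangle_eval, one_div_one_div, mul_sum, mul_sum]
  refine sum_congr rfl fun m hm => ?_
  rw [mul_left_comm, six_point_weight_eq_triangle_moment h1 h2 h3
    ((add_le_totalDegree_of_mem_support hm).trans hf), mul_left_comm]
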